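/- arXiv:1711.03600 — 4 statements merged into one kernel-verified Lean document; each statement's English description precedes it below -/
import Mathlib

section
/- For all integers r ≥ 1 and h ≥ 3, the girth of the zig-zag nanotube graph ZT(r,h) equals 6. -/
/-- The zig-zag nanotube `ZT(r,h)` with `r` layers of hexagons, each containing `h` hexagons:
vertex set `ZMod (2h) × {0,…,r}`; ring edges join `(i,j)` and `(i+1,j)`, and vertical edges
join `(i,j)` and `(i,j+1)` when the parity of `i` equals the parity of `j`. -/
def ZT (r h : ℕ) : SimpleGraph (ZMod (2 * h) × Fin (r + 1)) :=
  SimpleGraph.fromRel (fun p q =>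
    (p.2 = q.2 ∧ q.1 = p.1 + 1) ∨
    (p.1 = q.1 ∧ (q.2 : ℕ) = (p.2 : ℕ) + 1 ∧ p.1.val % 2 = (p.2 : ℕ) % 2))

namespace ZTaux

variable {r h : ℕ}

lemma step_val (hh : 3 ≤ h) {x y : ZMod (2*h)} (hxy : y = x + 1) :
    y.val = x.val + 1 ∨ (x.val = 2*h - 1 ∧ y.val = 0) := by
  haveI : NeZero (2*h) := ⟨by omega⟩
  have hx := ZMod.val_lt x
  have h1 : (1 : ZMod (2*h)).val = 1 := by
    rw [show (1 : ZMod (2*h)) = ((1:ℕ) : ZMod (2*h)) by push_cast; ring]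
    exact ZMod.val_natCast_of_lt (by omega)
  have := ZMod.val_add x 1
  rw [h1, ← hxy] at this
  rcases Nat.lt_or_ge (x.val + 1) (2*h) with hlt | hge
  · left; rw [this, Nat.mod_eq_of_lt hlt]
  · right
    have hx1 : x.val + 1 = 2*h := by omega
    exact ⟨by omega, by rw [this, hx1, Nat.mod_self]⟩

lemma adj_val (hh : 3 ≤ h) {x y : ZMod (2*h) × Fin (r+1)} (hxy : (ZT r h).Adj x y) :
    (x.2.val = y.2.val ∧
      ((y.1.val = x.1.val + 1 ∨ (x.1.val = 2*h - 1 ∧ y.1.val = 0)) ∨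
       (x.1.val = y.1.val + 1 ∨ (y.1.val = 2*h - 1 ∧ x.1.val = 0)))) ∨
    (x.1.val = y.1.val ∧
      ((y.2.val = x.2.val + 1 ∧ x.1.val % 2 = x.2.val % 2) ∨
       (x.2.val = y.2.val + 1 ∧ y.1.val % 2 = y.2.val % 2))) := by
  rw [ZT, SimpleGraph.fromRel_adj] at hxy
  rcases hxy with ⟨hne, (⟨h2, h1⟩ | ⟨h1, h2, h3⟩) | (⟨h2, h1⟩ | ⟨h1, h2, h3⟩)⟩
  · exact Or.inl ⟨congrArg Fin.val h2, Or.inl (step_val hh h1)⟩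
  · exact Or.inr ⟨congrArg ZMod.val h1, Or.inl ⟨h2, h3⟩⟩
  · exact Or.inl ⟨(congrArg Fin.val h2).symm, Or.inr (step_val hh h1)⟩
  · exact Or.inr ⟨(congrArg ZMod.val h1).symm, Or.inr ⟨h2, h3⟩⟩

lemma adj_parity (hh : 3 ≤ h) {x y : ZMod (2*h) × Fin (r+1)} (hxy : (ZT r h).Adj x y) :
    (x.1.val + x.2.val + 1) % 2 = (y.1.val + y.2.val) % 2 := by
  rcases adj_val hh hxy with ⟨h1, h2⟩ | ⟨h1, h2⟩ <;> omega

lemma walk_parity (hh : 3 ≤ h) {u v : ZMod (2*h) × Fin (r+1)} (p : (ZT r h).Walk u v) :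
    (p.length + u.1.val + u.2.val) % 2 = (v.1.val + v.2.val) % 2 := by
  induction p with
  | nil => simp
  | cons ha p ih =>
    have := adj_parity hh ha
    simp only [SimpleGraph.Walk.length_cons]
    omega

lemma no4 (hh : 3 ≤ h) {v a b c : ZMod (2*h) × Fin (r+1)}
    (h1 : (ZT r h).Adj v a) (h2 : (ZT r h).Adj a b) (h3 : (ZT r h).Adj b c)
    (h4 : (ZT r h).Adj c v) (hvb : v ≠ b) (hac : a ≠ c) : False := by
  haveI : NeZero (2*h) := ⟨by omega⟩
  have e1 := adj_val hh h1
  have e2 := adj_val hh h2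
  have e3 := adj_val hh h3
  have e4 := adj_val hh h4
  have bv := ZMod.val_lt v.1
  have ba := ZMod.val_lt a.1
  have bb := ZMod.val_lt b.1
  have bc := ZMod.val_lt c.1
  have hvb' : ¬ (v.1.val = b.1.val ∧ v.2.val = b.2.val) := by
    rintro ⟨p1, p2⟩
    exact hvb (Prod.ext (ZMod.val_injective _ p1) (Fin.val_injective p2))
  have hac' : ¬ (a.1.val = c.1.val ∧ a.2.val = c.2.val) := by
    rintro ⟨p1, p2⟩
    exact hac (Prod.ext (ZMod.val_injective _ p1) (Fin.val_injective p2))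
  omega

end ZTaux

theorem ZT_egirth (r h : ℕ) (hr : 1 ≤ r) (hh : 3 ≤ h) : (ZT r h).egirth = 6 := by
  haveI : NeZero (2*h) := ⟨by omega⟩
  -- value computations
  have z0 : (0 : ZMod (2*h)).val = 0 := ZMod.val_zero
  have z1 : (1 : ZMod (2*h)).val = 1 := by
    rw [show (1 : ZMod (2*h)) = ((1:ℕ) : ZMod (2*h)) by push_cast; ring]
    exact ZMod.val_natCast_of_lt (by omega)
  have z2 : (2 : ZMod (2*h)).val = 2 := by
    rw [show (2 : ZMod (2*h)) = ((2:ℕ) : ZMod (2*h)) by push_cast; ring]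
    exact ZMod.val_natCast_of_lt (by omega)
  have f0 : ((0 : Fin (r+1)) : ℕ) = 0 := rfl
  have f1 : ((1 : Fin (r+1)) : ℕ) = 1 := by
    rw [Fin.val_one']
    exact Nat.mod_eq_of_lt (by omega)
  -- distinctness of ZMod elements
  have ne01 : (0 : ZMod (2*h)) ≠ 1 := fun he => by
    have := congrArg ZMod.val he; rw [z0, z1] at this; omega
  have ne02 : (0 : ZMod (2*h)) ≠ 2 := fun he => by
    have := congrArg ZMod.val he; rw [z0, z2] at this; omega
  have ne12 : (1 : ZMod (2*h)) ≠ 2 := fun he => by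
    have := congrArg ZMod.val he; rw [z1, z2] at this; omega
  have fne01 : (0 : Fin (r+1)) ≠ 1 := fun he => by
    have := congrArg Fin.val he; rw [f0, f1] at this; omega
  -- adjacencies of the hexagon
  have a01 : (ZT r h).Adj (0, 0) (1, 0) := by
    rw [ZT, SimpleGraph.fromRel_adj]
    exact ⟨by simp [Prod.ext_iff, ne01], Or.inl (Or.inl ⟨rfl, (zero_add 1).symm⟩)⟩
  have a12 : (ZT r h).Adj (1, 0) (2, 0) := by
    rw [ZT, SimpleGraph.fromRel_adj]
    exact ⟨by simp [Prod.ext_iff, ne12], Or.inl (Or.inl ⟨rfl, one_add_one_eq_two.symm⟩)⟩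
  have a23 : (ZT r h).Adj (2, 0) (2, 1) := by
    rw [ZT, SimpleGraph.fromRel_adj]
    exact ⟨by simp [Prod.ext_iff, fne01], Or.inl (Or.inr ⟨rfl, by rw [f0, f1], by rw [z2, f0]⟩)⟩
  have a34 : (ZT r h).Adj (2, 1) (1, 1) := by
    rw [ZT, SimpleGraph.fromRel_adj]
    exact ⟨by simp [Prod.ext_iff, ne12.symm], Or.inr (Or.inl ⟨rfl, one_add_one_eq_two.symm⟩)⟩
  have a45 : (ZT r h).Adj (1, 1) (0, 1) := by
    rw [ZT, SimpleGraph.fromRel_adj]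
    exact ⟨by simp [Prod.ext_iff, ne01.symm], Or.inr (Or.inl ⟨rfl, (zero_add 1).symm⟩)⟩
  have a50 : (ZT r h).Adj (0, 1) (0, 0) := by
    rw [ZT, SimpleGraph.fromRel_adj]
    exact ⟨by simp [Prod.ext_iff, fne01.symm], Or.inr (Or.inr ⟨rfl, by rw [f0, f1], by rw [z0, f0]⟩)⟩
  -- the hexagonal cycle
  let w : (ZT r h).Walk (0, 0) (0, 0) :=
    .cons a01 (.cons a12 (.cons a23 (.cons a34 (.cons a45 (.cons a50 .nil)))))
  have hcyc : w.IsCycle := by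
    rw [show w = SimpleGraph.Walk.cons a01
      (.cons a12 (.cons a23 (.cons a34 (.cons a45 (.cons a50 .nil))))) from rfl,
      SimpleGraph.Walk.cons_isCycle_iff]
    constructor
    · rw [SimpleGraph.Walk.isPath_def]
      simp [Prod.ext_iff, ne01, ne02, ne12, ne01.symm, ne02.symm, ne12.symm, fne01, fne01.symm]
    · simp [Prod.ext_iff, ne01, ne02, ne12, ne01.symm, ne02.symm, ne12.symm, fne01, fne01.symm,
        Sym2.eq_iff]
  refine le_antisymm ?_ ?_
  · have hle : (ZT r h).egirth ≤ (w.length : ℕ∞) := by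
      unfold SimpleGraph.egirth
      exact iInf_le_of_le _ (iInf_le_of_le w (iInf_le_of_le hcyc le_rfl))
    have hl : w.length = 6 := rfl
    rw [hl] at hle
    exact le_trans hle (by norm_cast)
  · refine SimpleGraph.le_egirth.mpr fun a w hw => ?_
    have h3 := hw.three_le_length
    have heven : w.length % 2 = 0 := by
      have := ZTaux.walk_parity hh w
      omega
    have h4 : w.length ≠ 4 := by
      intro hlen
      cases w with
      | nil => simp at hlen
      | cons ha1 w1 =>
        cases w1 with
        | nil => simp at hlen
        | cons ha2 w2 =>
          cases w2 with
          | nil => simp at hlen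
          | cons ha3 w3 =>
            cases w3 with
            | nil => simp at hlen
            | cons ha4 w4 =>
              cases w4 with
              | cons ha5 w5 => simp [SimpleGraph.Walk.length_cons] at hlen
              | nil =>
                rw [SimpleGraph.Walk.isCycle_def] at hw
                obtain ⟨-, -, hnd⟩ := hw
                simp [List.nodup_cons] at hnd
                exact ZTaux.no4 hh ha1 ha2 ha3 ha4 (by tauto) (by tauto)
    have : 6 ≤ w.length := by omega
    exact_mod_cast this
end

section
/- For all integers r ≥ 1 and h ≥ 3, the graph obtained from ZT(r,h) by deleting all ring edges joining (i,j) and (i+1,j) for which i + j is even (parity of i taken via its representative in {0,…,2h−1}) has exactly h connected components, and each connected component (with its induced subgraph structure) is isomorphic to the path graph P_{2r+2} on 2r + 2 vertices. -/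
/-- The (unordered) predicate selecting the ring edges of `ZT(r,h)` that join `(i,j)` and
`(i+1,j)` with `i + j` even. -/
def ZTringEven (r h : ℕ) (p q : ZMod (2 * h) × Fin (r + 1)) : Prop :=
  p.2 = q.2 ∧ ((q.1 = p.1 + 1 ∧ Even (p.1.val + (p.2 : ℕ))) ∨
               (p.1 = q.1 + 1 ∧ Even (q.1.val + (p.2 : ℕ))))

/-- The graph obtained from `ZT(r,h)` by deleting all ring edges joining `(i,j)` and
`(i+1,j)` for which `i + j` is even. -/
def ZTdelRingEven (r h : ℕ) : SimpleGraph (ZMod (2 * h) × Fin (r + 1)) where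
  Adj p q := (ZT r h).Adj p q ∧ ¬ ZTringEven r h p q
  symm := ⟨fun p q hpq => ⟨hpq.1.symm, by
    intro hc
    apply hpq.2
    obtain ⟨h1, h2⟩ := hc
    refine ⟨h1.symm, ?_⟩
    have hv : (p.2 : ℕ) = (q.2 : ℕ) := by rw [h1]
    rcases h2 with ⟨h2, h3⟩ | ⟨h2, h3⟩
    · exact Or.inr ⟨h2, by rwa [hv]⟩
    · exact Or.inl ⟨h2, by rwa [hv]⟩⟩⟩
  loopless := ⟨fun p hp => hp.1.ne rfl⟩

/-!
Deleting the ring edges `(i,j)–(i+1,j)` with `i + j` even leaves the edges of the staircases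
`(2a+1,0), (2a+2,0), (2a+2,1), (2a+3,1), …, (2a+r+1,r), (2a+r+2,r)` for `a < h`, which alternate
between a kept ring edge and a vertical edge. These `h` staircases of `2r+2` vertices partition the
`2h(r+1)` vertices, and `i - j - [i + j even]` is constant along every edge and equals `2a+1` on the
`a`-th staircase, so no edge joins two staircases. Hence the graph is isomorphic to the box product
`⊥ □ P_{2r+2}` on `Fin h × Fin (2r+2)`, whose components are the fibres over `Fin h`.
-/

namespace SimpleGraph

variable {α β V : Type*} {H : SimpleGraph β} {G : SimpleGraph V}

lemma reachable_bot_boxProd_iff (hH : H.Preconnected) {x y : α × β} :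
    ((⊥ : SimpleGraph α) □ H).Reachable x y ↔ x.1 = y.1 := by
  simp [reachable_boxProd, reachable_bot, hH x.2 y.2]

namespace Iso

lemma reachable_iff_fst_eq (e : ((⊥ : SimpleGraph α) □ H) ≃g G) (hH : H.Preconnected)
    {x y : α × β} :
    G.Reachable (e x) (e y) ↔ x.1 = y.1 :=
  e.reachable_iff.trans (reachable_bot_boxProd_iff hH)

lemma natCard_connectedComponent_eq_of_bot_boxProd (e : ((⊥ : SimpleGraph α) □ H) ≃g G)
    (hH : H.Connected) :
    Nat.card G.ConnectedComponent = Nat.card α := by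
  obtain ⟨b⟩ := hH.nonempty
  refine (Nat.card_congr (Equiv.ofBijective (fun a => G.connectedComponentMk (e (a, b)))
    ⟨fun a a' haa' => ?_, ConnectedComponent.ind fun v => ?_⟩)).symm
  · exact (e.reachable_iff_fst_eq hH.preconnected).1 (ConnectedComponent.exact haa')
  · obtain ⟨x, rfl⟩ := e.surjective v
    exact ⟨x.1, ConnectedComponent.sound ((e.reachable_iff_fst_eq hH.preconnected).2 rfl)⟩

lemma nonempty_induce_supp_iso_of_bot_boxProd (e : ((⊥ : SimpleGraph α) □ H) ≃g G)
    (hH : H.Preconnected) (C : G.ConnectedComponent) :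
    Nonempty (G.induce C.supp ≃g H) := by
  refine C.ind fun v => ?_
  obtain ⟨x, rfl⟩ := e.surjective v
  have hsupp : (G.connectedComponentMk (e x)).supp =
      Set.range (e.toEmbedding.comp (boxProdRight ⊥ H x.1)) := by
    ext w
    obtain ⟨y, rfl⟩ := e.surjective w
    simp [ConnectedComponent.eq, e.reachable_iff_fst_eq hH, Prod.ext_iff, eq_comm]
  rw [hsupp]
  exact ⟨(Embedding.isoInduceRange _).symm⟩

end Iso

end SimpleGraph

lemma ZMod.val_add_one_mod_two {n : ℕ} [NeZero n] (hn : 2 ∣ n) (x : ZMod n) :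
    (x + 1).val % 2 = (x.val + 1) % 2 := by
  rw [ZMod.val_add, ZMod.val_one_eq_one_mod, Nat.mod_mod_of_dvd _ hn, Nat.add_mod,
    Nat.mod_mod_of_dvd 1 hn, ← Nat.add_mod]

lemma ZMod.val_natCast_mod_two {n : ℕ} (hn : 2 ∣ n) (a : ℕ) :
    (a : ZMod n).val % 2 = a % 2 := by
  rw [ZMod.val_natCast, Nat.mod_mod_of_dvd _ hn]

lemma ZMod.ne_add_two {n : ℕ} (hn : 2 < n) (x : ZMod n) : x ≠ x + 2 := by
  intro hx
  have : n ∣ 2 := (ZMod.natCast_eq_zero_iff 2 n).1 (by simpa using hx)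
  exact absurd (Nat.le_of_dvd two_pos this) (by omega)

namespace ZTdelRingEven

open SimpleGraph

variable {r h : ℕ}

def Step (r h : ℕ) (p q : ZMod (2 * h) × Fin (r + 1)) : Prop :=
  (p.2 = q.2 ∧ q.1 = p.1 + 1 ∧ ¬ Even (p.1.val + (p.2 : ℕ))) ∨
  (p.1 = q.1 ∧ (q.2 : ℕ) = p.2 + 1 ∧ p.1.val % 2 = (p.2 : ℕ) % 2)

lemma eq_fromRel_step (hh : 2 ≤ h) : ZTdelRingEven r h = fromRel (Step r h) := by
  ext ⟨i, j⟩ ⟨i', j'⟩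
  have h2 : ∀ x : ZMod (2 * h), x ≠ x + 1 + 1 := fun x => by
    rw [add_assoc, one_add_one_eq_two]; exact ZMod.ne_add_two (by omega) x
  simp only [ZTdelRingEven, ZT, ZTringEven, Step, fromRel_adj]
  -- `h2` rules out a ring edge being deleted in its other orientation
  grind

def label (r h : ℕ) (v : ZMod (2 * h) × Fin (r + 1)) : ZMod (2 * h) :=
  v.1 - (v.2 : ℕ) - if Even (v.1.val + (v.2 : ℕ)) then 1 else 0

def pos (r h : ℕ) (v : ZMod (2 * h) × Fin (r + 1)) : ℕ :=
  2 * (v.2 : ℕ) + if Even (v.1.val + (v.2 : ℕ)) then 1 else 0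

lemma Step.label_eq_and_pos_eq_succ [NeZero h] {p q : ZMod (2 * h) × Fin (r + 1)}
    (hpq : Step r h p q) : label r h p = label r h q ∧ pos r h q = pos r h p + 1 := by
  obtain ⟨i, j⟩ := p
  obtain ⟨i', j'⟩ := q
  rcases hpq with ⟨rfl, rfl, hodd⟩ | ⟨rfl, hj, hpar⟩ <;> dsimp only at *
  · have heven : Even ((i + 1).val + j) := by
      have := ZMod.val_add_one_mod_two (dvd_mul_right 2 h) i
      rw [Nat.not_even_iff] at hodd
      rw [Nat.even_iff]
      omega
    refine ⟨?_, ?_⟩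
    · simp only [label, if_neg hodd, if_pos heven]
      ring
    · simp only [pos, if_neg hodd, if_pos heven]
  · have heven : Even (i.val + j) := by rw [Nat.even_iff]; omega
    have hodd : ¬ Even (i.val + j') := by rw [Nat.not_even_iff]; omega
    simp only [label, pos, if_pos heven, if_neg hodd]
    rw [hj]
    constructor
    · push_cast; ring
    · omega

def staircase (r h : ℕ) (x : Fin h × Fin (2 * r + 2)) : ZMod (2 * h) × Fin (r + 1) :=
  (((2 * x.1.val + 1 + (x.2.val + 1) / 2 : ℕ) : ZMod (2 * h)), ⟨x.2.val / 2, by omega⟩)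

lemma staircase_parity (x : Fin h × Fin (2 * r + 2)) :
    ((staircase r h x).1.val + ((staircase r h x).2 : ℕ)) % 2 = (x.2.val + 1) % 2 := by
  have := ZMod.val_natCast_mod_two (dvd_mul_right 2 h) (2 * x.1.val + 1 + (x.2.val + 1) / 2)
  simp only [staircase]
  omega

lemma pos_staircase (x : Fin h × Fin (2 * r + 2)) : pos r h (staircase r h x) = x.2 := by
  have := staircase_parity x
  unfold pos
  split_ifs with heven <;> simp only [Nat.even_iff] at heven <;> simp only [staircase] <;> omega

lemma label_staircase (x : Fin h × Fin (2 * r + 2)) :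
    label r h (staircase r h x) = ((2 * x.1.val + 1 : ℕ) : ZMod (2 * h)) := by
  have := staircase_parity x
  unfold label
  split_ifs with heven <;> simp only [Nat.even_iff] at heven
  · have ht : (x.2.val + 1) / 2 = x.2.val / 2 + 1 := by omega
    simp only [staircase, ht]
    push_cast; ring
  · have ht : (x.2.val + 1) / 2 = x.2.val / 2 := by omega
    simp only [staircase, ht]
    push_cast; ring

lemma step_staircase {a : Fin h} {s t : Fin (2 * r + 2)} (hst : s.val + 1 = t) :
    Step r h (staircase r h (a, s)) (staircase r h (a, t)) := by
  have hpar := staircase_parity (r := r) (h := h) (a, s)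
  dsimp only at hpar
  rcases Nat.even_or_odd s.val with heven | hodd
  · rw [Nat.even_iff] at heven
    refine Or.inl ⟨?_, ?_, ?_⟩
    · refine Fin.ext (show s.val / 2 = t.val / 2 by omega)
    · have ht : (t.val + 1) / 2 = (s.val + 1) / 2 + 1 := by omega
      simp only [staircase, ht]
      push_cast; ring
    · rw [Nat.not_even_iff]; omega
  · rw [Nat.odd_iff] at hodd
    refine Or.inr ⟨?_, ?_, ?_⟩
    · have ht : (t.val + 1) / 2 = (s.val + 1) / 2 := by omega
      simp only [staircase, ht]
    · simp only [staircase]; omega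
    · omega

lemma odd_natCast_injective {a b : Fin h}
    (hab : ((2 * a.val + 1 : ℕ) : ZMod (2 * h)) = ((2 * b.val + 1 : ℕ) : ZMod (2 * h))) :
    a = b := by
  have := congrArg ZMod.val hab
  rw [ZMod.val_cast_of_lt (by omega), ZMod.val_cast_of_lt (by omega)] at this
  exact Fin.ext (by omega)

lemma staircase_injective : Function.Injective (staircase r h) := by
  rintro ⟨a, s⟩ ⟨b, t⟩ hst
  have hab := label_staircase (r := r) (a, s)
  rw [hst, label_staircase] at hab
  have hs := pos_staircase (h := h) (a, s)
  rw [hst, pos_staircase] at hs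
  exact Prod.ext (odd_natCast_injective hab.symm) (Fin.ext hs.symm)

lemma staircase_bijective [NeZero h] : Function.Bijective (staircase r h) :=
  (Fintype.bijective_iff_injective_and_card _).2
    ⟨staircase_injective, by simp only [Fintype.card_prod, Fintype.card_fin, ZMod.card]; ring⟩

lemma step_staircase_iff [NeZero h] {x y : Fin h × Fin (2 * r + 2)} :
    Step r h (staircase r h x) (staircase r h y) ↔ x.1 = y.1 ∧ x.2.val + 1 = y.2 := by
  refine ⟨fun hxy => ?_, fun ⟨hxy, hst⟩ => ?_⟩
  · obtain ⟨hl, hp⟩ := hxy.label_eq_and_pos_eq_succ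
    rw [label_staircase, label_staircase] at hl
    rw [pos_staircase, pos_staircase] at hp
    exact ⟨odd_natCast_injective hl, hp.symm⟩
  · obtain ⟨a, s⟩ := x
    obtain ⟨b, t⟩ := y
    obtain rfl : a = b := hxy
    exact step_staircase hst

lemma adj_staircase_iff (hh : 2 ≤ h) {x y : Fin h × Fin (2 * r + 2)} :
    (ZTdelRingEven r h).Adj (staircase r h x) (staircase r h y) ↔
      ((⊥ : SimpleGraph (Fin h)) □ pathGraph (2 * r + 2)).Adj x y := by
  have : NeZero h := ⟨by omega⟩
  rw [eq_fromRel_step hh, fromRel_adj, step_staircase_iff, step_staircase_iff, boxProd_adj,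
    pathGraph_adj, staircase_injective.ne_iff]
  simp only [bot_adj, false_and, false_or]
  constructor
  · rintro ⟨-, ⟨hxy, hst⟩ | ⟨hxy, hts⟩⟩
    · exact ⟨Or.inl hst, hxy⟩
    · exact ⟨Or.inr hts, hxy.symm⟩
  · rintro ⟨hst | hts, hxy⟩
    · exact ⟨fun heq => by simp [heq] at hst, Or.inl ⟨hxy, hst⟩⟩
    · exact ⟨fun heq => by simp [heq] at hts, Or.inr ⟨hxy.symm, hts⟩⟩

noncomputable def isoBotBoxProdPathGraph (hh : 2 ≤ h) :
    ((⊥ : SimpleGraph (Fin h)) □ pathGraph (2 * r + 2)) ≃g ZTdelRingEven r h :=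
  haveI : NeZero h := ⟨by omega⟩
  ⟨Equiv.ofBijective _ staircase_bijective, adj_staircase_iff hh⟩

end ZTdelRingEven

theorem ZTdelRingEven_components_general (r h : ℕ) (hh : 3 ≤ h) :
    Nat.card (ZTdelRingEven r h).ConnectedComponent = h ∧
    ∀ c : (ZTdelRingEven r h).ConnectedComponent,
      Nonempty ((ZTdelRingEven r h).induce c.supp ≃g SimpleGraph.pathGraph (2 * r + 2)) := by
  have e := ZTdelRingEven.isoBotBoxProdPathGraph (r := r) (h := h) (by omega)
  refine ⟨?_, e.nonempty_induce_supp_iso_of_bot_boxProd (SimpleGraph.pathGraph_preconnected _)⟩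
  simpa using e.natCard_connectedComponent_eq_of_bot_boxProd (SimpleGraph.pathGraph_connected _)

theorem ZTdelRingEven_components (r h : ℕ) (hr : 1 ≤ r) (hh : 3 ≤ h) :
    Nat.card (ZTdelRingEven r h).ConnectedComponent = h ∧
    ∀ c : (ZTdelRingEven r h).ConnectedComponent,
      Nonempty ((ZTdelRingEven r h).induce c.supp ≃g SimpleGraph.pathGraph (2 * r + 2)) :=
  ZTdelRingEven_components_general r h hh
end

section
/- For every integer r ≥ 1, the Wiener polarity index of the zig-zag nanotube ZT(r,3) equals 24r − 3. -/
/-- The Wiener polarity index of a simple graph: the number of unordered pairs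
of vertices at (shortest-path) distance `3`. -/
noncomputable def wienerPolarity {V : Type*} (G : SimpleGraph V) : ℕ :=
  Nat.card {p : Sym2 V // Sym2.lift ⟨fun u v => G.dist u v, fun _ _ => SimpleGraph.dist_comm⟩ p = 3}

namespace SimpleGraph

variable {V W : Type*} {G : SimpleGraph V} {H : SimpleGraph W}

def distThreePairs (G : SimpleGraph V) : Set (V × V) := {q | G.dist q.1 q.2 = 3}

theorem two_mul_wienerPolarity [Fintype V] (G : SimpleGraph V) :
    2 * wienerPolarity G = (distThreePairs G).ncard := by
  classical
  let D : SimpleGraph V := fromRel fun u v => G.dist u v = 3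
  have hD : ∀ u v, D.Adj u v ↔ G.dist u v = 3 := fun u v => by
    rw [fromRel_adj, dist_comm (u := v), or_self, and_iff_right_iff_imp]
    rintro h rfl
    simp at h
  have hW : wienerPolarity G = D.edgeFinset.card := by
    rw [edgeFinset_card, ← Nat.card_eq_fintype_card, wienerPolarity]
    refine Nat.card_congr (Equiv.subtypeEquivRight fun p => ?_)
    induction p using Sym2.ind with
    | _ u v => simp [hD]
  have hP : distThreePairs G = ↑(({q | D.Adj q.1 q.2} : Finset (V × V))) := by
    ext q
    simp [distThreePairs, hD]
  rw [hW, two_mul_card_edgeFinset, hP, Set.ncard_coe_finset]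

theorem Walk.exists_adj_adj_adj_of_length_eq_three {u v : V} (p : G.Walk u v)
    (hp : p.length = 3) : ∃ w, G.Adj u w ∧ ∃ x, G.Adj w x ∧ G.Adj x v :=
  ⟨p.getVert 1, by simpa using p.adj_getVert_succ (i := 0) (by omega),
    p.getVert 2, p.adj_getVert_succ (by omega),
    by simpa [← hp] using p.adj_getVert_succ (i := 2) (by omega)⟩

theorem dist_eq_three_iff {u v : V} :
    G.dist u v = 3 ↔ u ≠ v ∧ ¬ G.Adj u v ∧ (∀ w, ¬ (G.Adj u w ∧ G.Adj w v)) ∧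
      ∃ w, G.Adj u w ∧ ∃ x, G.Adj w x ∧ G.Adj x v := by
  have hcn : G.commonNeighbors u v = ∅ ↔ ∀ w, ¬ (G.Adj u w ∧ G.Adj w v) := by
    simp [Set.eq_empty_iff_forall_notMem, mem_commonNeighbors, adj_comm _ v]
  rw [dist, ENat.toNat_eq_iff (by norm_num), ← hcn, ← and_assoc, ← and_assoc,
    and_assoc (a := u ≠ v), ← two_lt_edist_iff]
  constructor
  · intro h
    obtain ⟨p, hp⟩ := exists_walk_of_edist_eq_coe h
    exact ⟨by rw [h]; norm_num, p.exists_adj_adj_adj_of_length_eq_three hp⟩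
  · rintro ⟨hlt, w, huw, x, hwx, hxv⟩
    refine le_antisymm (by simpa using edist_le (.cons huw (.cons hwx (.cons hxv .nil)))) ?_
    have := Order.add_one_le_of_lt hlt
    norm_num at this
    exact_mod_cast this

theorem ncard_setOf_dist_eq_three_and_eq_card [Fintype V] [DecidableEq V] [DecidableRel G.Adj]
    (P : V × V → Prop) [DecidablePred P] :
    {q : V × V | G.dist q.1 q.2 = 3 ∧ P q}.ncard =
      Fintype.card {q : V × V // P q ∧ q.1 ≠ q.2 ∧ ¬ G.Adj q.1 q.2 ∧
        (∀ w, ¬ (G.Adj q.1 w ∧ G.Adj w q.2)) ∧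
          ∃ w, G.Adj q.1 w ∧ ∃ x, G.Adj w x ∧ G.Adj x q.2} := by
  rw [← Nat.card_eq_fintype_card, ← Nat.card_coe_set_eq]
  exact Nat.card_congr (Equiv.subtypeEquivRight fun q => by
    rw [Set.mem_ofPred_eq, dist_eq_three_iff, and_comm])

theorem Embedding.dist_eq_three_iff (f : G ↪g H) {u v : V} (huv : u ≠ v)
    (hcommon : ∀ w, H.Adj (f u) w → H.Adj w (f v) → w ∈ Set.range f)
    (hwalk : ¬ G.Adj u v → ∀ w x, H.Adj (f u) w → H.Adj w x → H.Adj x (f v) →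
      w ∈ Set.range f ∧ x ∈ Set.range f) :
    H.dist (f u) (f v) = 3 ↔ G.dist u v = 3 := by
  simp only [SimpleGraph.dist_eq_three_iff, f.map_adj_iff, ne_eq, f.injective.eq_iff, huv,
    not_false_eq_true, true_and]
  constructor
  · rintro ⟨hnadj, hcn, w, huw, x, hwx, hxv⟩
    obtain ⟨⟨w, rfl⟩, ⟨x, rfl⟩⟩ := hwalk hnadj _ _ huw hwx hxv
    refine ⟨hnadj, fun w hw => hcn (f w) ?_, w, f.map_adj_iff.1 huw, x, f.map_adj_iff.1 hwx,
      f.map_adj_iff.1 hxv⟩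
    exact ⟨f.map_adj_iff.2 hw.1, f.map_adj_iff.2 hw.2⟩
  · rintro ⟨hnadj, hcn, w, huw, x, hwx, hxv⟩
    refine ⟨hnadj, ?_, f w, f.map_adj_iff.2 huw, f x, f.map_adj_iff.2 hwx, f.map_adj_iff.2 hxv⟩
    rintro w ⟨huw', hwv'⟩
    obtain ⟨w, rfl⟩ := hcommon w huw' hwv'
    exact hcn w ⟨f.map_adj_iff.1 huw', f.map_adj_iff.1 hwv'⟩

theorem Embedding.image_distThreePairs (f : G ↪g H) {P : Set (V × V)} {Q : Set (W × W)}
    (hPQ : ∀ u v, (f u, f v) ∈ Q ↔ (u, v) ∈ P)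
    (hrange : ∀ q ∈ distThreePairs H ∩ Q, q.1 ∈ Set.range f ∧ q.2 ∈ Set.range f)
    (hcommon : ∀ u v, u ≠ v → (u, v) ∈ P →
      ∀ w, H.Adj (f u) w → H.Adj w (f v) → w ∈ Set.range f)
    (hwalk : ∀ u v, (u, v) ∈ P → ¬ G.Adj u v → ∀ w x, H.Adj (f u) w → H.Adj w x →
      H.Adj x (f v) → w ∈ Set.range f ∧ x ∈ Set.range f) :
    Prod.map f f '' (distThreePairs G ∩ P) = distThreePairs H ∩ Q := by
  have key : ∀ u v, (u, v) ∈ P → (H.dist (f u) (f v) = 3 ↔ G.dist u v = 3) := by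
    intro u v hP
    by_cases huv : u = v
    · simp [huv]
    · exact f.dist_eq_three_iff huv (hcommon u v huv hP) (hwalk u v hP)
  ext ⟨a, b⟩
  constructor
  · rintro ⟨⟨u, v⟩, ⟨hd, hP⟩, hq⟩
    obtain ⟨rfl, rfl⟩ := Prod.ext_iff.1 hq
    exact ⟨(key u v hP).2 hd, (hPQ u v).2 hP⟩
  · rintro ⟨hd, hQ⟩
    obtain ⟨⟨u, rfl⟩, ⟨v, rfl⟩⟩ := hrange (a, b) ⟨hd, hQ⟩
    have hP := (hPQ u v).1 hQ
    exact ⟨(u, v), ⟨(key u v hP).1 hd, hP⟩, rfl⟩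

end SimpleGraph

theorem ZMod.val_add_one_mod_two_s12 {h : ℕ} [NeZero h] (a : ZMod (2 * h)) :
    (a + 1).val % 2 = (a.val + 1) % 2 := by
  have : 1 < 2 * h := by have := NeZero.pos h; omega
  rw [ZMod.val_add, ZMod.val_one_eq_one_mod, Nat.mod_eq_of_lt this,
    Nat.mod_mod_of_dvd _ (dvd_mul_right 2 h)]

namespace ZT

open SimpleGraph

variable {r h : ℕ} {p q w x : ZMod (2 * h) × Fin (r + 1)}

instance : DecidableRel (ZT r h).Adj := fun p q => by
  unfold ZT
  exact inferInstanceAs (Decidable (p ≠ q ∧ (_ ∨ _)))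

theorem snd_le_succ_of_adj (hpq : (ZT r h).Adj p q) : (p.2 : ℕ) ≤ q.2 + 1 := by
  rcases hpq.2 with (⟨h1, _⟩ | ⟨_, h1, _⟩) | (⟨h1, _⟩ | ⟨_, h1, _⟩) <;> omega

theorem fst_eq_of_adj_of_snd_lt (hpq : (ZT r h).Adj p q) (hlt : (p.2 : ℕ) < q.2) :
    p.1 = q.1 ∧ p.1.val % 2 = (p.2 : ℕ) % 2 := by
  rcases hpq.2 with (⟨h1, _⟩ | ⟨h1, _, h2⟩) | (⟨h1, _⟩ | ⟨_, h1, _⟩)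
  · simp [h1] at hlt
  · exact ⟨h1, h2⟩
  · simp [h1] at hlt
  · omega

theorem eq_of_adj_of_adj_of_snd_lt (hpw : (ZT r h).Adj p w) (hqw : (ZT r h).Adj q w)
    (hp : (p.2 : ℕ) < w.2) (hq : (q.2 : ℕ) < w.2) : p = q := by
  have := snd_le_succ_of_adj hpw.symm
  have := snd_le_succ_of_adj hqw.symm
  exact Prod.ext ((fst_eq_of_adj_of_snd_lt hpw hp).1.trans (fst_eq_of_adj_of_snd_lt hqw hq).1.symm)
    (Fin.ext (by omega))

theorem val_fst_mod_two_ne_of_adj_of_snd_eq [NeZero h] (hpq : (ZT r h).Adj p q)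
    (he : p.2 = q.2) : p.1.val % 2 ≠ q.1.val % 2 := by
  have hp := ZMod.val_add_one_mod_two_s12 p.1
  have hq := ZMod.val_add_one_mod_two_s12 q.1
  rcases hpq.2 with (⟨_, h1⟩ | ⟨_, h1, _⟩) | (⟨_, h1⟩ | ⟨_, h1, _⟩)
  · rw [h1]; omega
  · omega
  · rw [h1]; omega
  · omega

theorem snd_lt_of_adj_of_adj (hp : (p.2 : ℕ) < r) (hq : (q.2 : ℕ) < r) (hpq : p ≠ q)
    (hpw : (ZT r h).Adj p w) (hwq : (ZT r h).Adj w q) : (w.2 : ℕ) < r := by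
  by_contra hw
  exact hpq (eq_of_adj_of_adj_of_snd_lt hpw hwq.symm (by omega) (by omega))

theorem snd_lt_of_adj_of_adj_of_adj [NeZero h] (hp : (p.2 : ℕ) < r) (hq : (q.2 : ℕ) < r)
    (hpq : ¬ (ZT r h).Adj p q) (hpw : (ZT r h).Adj p w) (hwx : (ZT r h).Adj w x)
    (hxq : (ZT r h).Adj x q) : (w.2 : ℕ) < r ∧ (x.2 : ℕ) < r := by
  have hwr := w.2.is_lt
  have hxr := x.2.is_lt
  rcases Nat.lt_or_ge (w.2 : ℕ) r with hw | hw
  · refine ⟨hw, ?_⟩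
    by_contra hx
    exact hpq (eq_of_adj_of_adj_of_snd_lt hwx hxq.symm (by omega) (by omega) ▸ hpw)
  obtain ⟨hpw₁, hpw₂⟩ := fst_eq_of_adj_of_snd_lt hpw (by omega)
  rcases Nat.lt_or_ge (x.2 : ℕ) r with hx | hx
  · exact absurd (eq_of_adj_of_adj_of_snd_lt hpw hwx.symm (by omega) (by omega) ▸ hxq) hpq
  obtain ⟨hqx₁, hqx₂⟩ := fst_eq_of_adj_of_snd_lt hxq.symm (by omega)
  have := val_fst_mod_two_ne_of_adj_of_snd_eq hwx (Fin.ext (by omega))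
  have := snd_le_succ_of_adj hpw.symm
  have := snd_le_succ_of_adj hxq
  rw [hpw₁] at hpw₂
  rw [hqx₁] at hqx₂
  omega

variable (r h)

def incl : ZT r h ↪g ZT (r + 1) h where
  toFun p := (p.1, p.2.castSucc)
  inj' p q hpq := by simpa [Prod.ext_iff] using hpq
  map_rel_iff' {p q} := by
    change (ZT (r + 1) h).Adj (p.1, p.2.castSucc) (q.1, q.2.castSucc) ↔ _
    simp [ZT, Prod.ext_iff, Fin.ext_iff]

def shift [NeZero h] : ZT r h ↪g ZT (r + 1) h where
  toFun p := (p.1 + 1, p.2.succ)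
  inj' p q hpq := by simpa [Prod.ext_iff] using hpq
  map_rel_iff' {p q} := by
    change (ZT (r + 1) h).Adj (p.1 + 1, p.2.succ) (q.1 + 1, q.2.succ) ↔ _
    have hmod (a b : ℕ) : (a + 1) % 2 = (b + 1) % 2 ↔ a % 2 = b % 2 := by omega
    simp [ZT, Prod.ext_iff, Fin.ext_iff, ZMod.val_add_one_mod_two_s12, hmod]

def topPairs : Set ((ZMod (2 * h) × Fin (r + 1)) × (ZMod (2 * h) × Fin (r + 1))) :=
  {q | (q.1.2 : ℕ) = r ∨ (q.2.2 : ℕ) = r}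

variable {r h}

instance : DecidablePred (· ∈ topPairs r h) := fun q =>
  inferInstanceAs (Decidable ((q.1.2 : ℕ) = r ∨ (q.2.2 : ℕ) = r))

@[simp] theorem incl_apply (p : ZMod (2 * h) × Fin (r + 1)) :
    incl r h p = (p.1, p.2.castSucc) := rfl

@[simp] theorem shift_apply [NeZero h] (p : ZMod (2 * h) × Fin (r + 1)) :
    shift r h p = (p.1 + 1, p.2.succ) := rfl

theorem mem_range_incl {p : ZMod (2 * h) × Fin (r + 2)} :
    p ∈ Set.range (incl r h) ↔ (p.2 : ℕ) < r + 1 := by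
  constructor
  · rintro ⟨q, rfl⟩
    exact q.2.is_lt
  · intro hp
    exact ⟨(p.1, ⟨p.2, hp⟩), rfl⟩

theorem mem_range_shift [NeZero h] {p : ZMod (2 * h) × Fin (r + 2)} :
    p ∈ Set.range (shift r h) ↔ 0 < (p.2 : ℕ) := by
  constructor
  · rintro ⟨q, rfl⟩
    exact Nat.succ_pos _
  · intro hp
    exact ⟨(p.1 - 1, ⟨p.2 - 1, by omega⟩),
      Prod.ext (sub_add_cancel _ _) (Fin.ext (by simp; omega))⟩

theorem ncard_distThreePairs_succ [NeZero h] (s : ℕ) :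
    (distThreePairs (ZT (s + 1) h)).ncard = (distThreePairs (ZT s h)).ncard +
      (distThreePairs (ZT (s + 1) h) ∩ topPairs (s + 1) h).ncard := by
  have himage : Prod.map (incl s h) (incl s h) '' (distThreePairs (ZT s h) ∩ Set.univ) =
      distThreePairs (ZT (s + 1) h) ∩ (topPairs (s + 1) h)ᶜ := by
    refine (incl s h).image_distThreePairs (fun u v => ?_) (fun q hq => ?_)
      (fun u v huv _ w huw hwv => ?_) (fun u v _ huv w x huw hwx hxv => ?_)
    · simp only [topPairs, Set.mem_compl_iff, Set.mem_ofPred_eq, incl_apply, Fin.val_castSucc,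
        Set.mem_univ, iff_true]
      omega
    · simp only [topPairs, Set.mem_inter_iff, Set.mem_compl_iff, Set.mem_ofPred_eq] at hq
      simp only [mem_range_incl]
      omega
    · rw [mem_range_incl]
      exact snd_lt_of_adj_of_adj (by simp; omega) (by simp; omega)
        ((incl s h).injective.ne huv) huw hwv
    · simp only [mem_range_incl]
      exact snd_lt_of_adj_of_adj_of_adj (by simp; omega) (by simp; omega)
        ((incl s h).map_adj_iff.not.2 huv) huw hwx hxv
  rw [← Set.ncard_inter_add_ncard_sdiff_eq_ncard (distThreePairs (ZT (s + 1) h))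
      (topPairs (s + 1) h), Set.sdiff_eq, ← himage, Set.inter_univ,
    Set.ncard_image_of_injective _ ((incl s h).injective.prodMap (incl s h).injective), add_comm]

theorem ncard_distThreePairs_inter_topPairs_succ [NeZero h] {s : ℕ} (hs : 3 ≤ s) :
    (distThreePairs (ZT (s + 1) h) ∩ topPairs (s + 1) h).ncard =
      (distThreePairs (ZT s h) ∩ topPairs s h).ncard := by
  have himage : Prod.map (shift s h) (shift s h) '' (distThreePairs (ZT s h) ∩ topPairs s h) =
      distThreePairs (ZT (s + 1) h) ∩ topPairs (s + 1) h := by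
    refine (shift s h).image_distThreePairs (fun u v => ?_) (fun q hq => ?_)
      (fun u v _ huv w huw hwv => ?_) (fun u v huv _ w x huw hwx hxv => ?_)
    · simp [topPairs]
    · obtain ⟨hd, htop⟩ := hq
      obtain ⟨-, -, -, w, huw, x, hwx, hxv⟩ := dist_eq_three_iff.1 hd
      have := snd_le_succ_of_adj huw
      have := snd_le_succ_of_adj huw.symm
      have := snd_le_succ_of_adj hwx
      have := snd_le_succ_of_adj hwx.symm
      have := snd_le_succ_of_adj hxv
      have := snd_le_succ_of_adj hxv.symm
      simp only [topPairs, Set.mem_ofPred_eq] at htop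
      simp only [mem_range_shift]
      omega
    · have := snd_le_succ_of_adj huw
      have := snd_le_succ_of_adj hwv.symm
      simp only [topPairs, Set.mem_ofPred_eq] at huv
      simp only [mem_range_shift, shift_apply, Fin.val_succ] at *
      omega
    · have := snd_le_succ_of_adj huw
      have := snd_le_succ_of_adj hwx
      have := snd_le_succ_of_adj hwx.symm
      have := snd_le_succ_of_adj hxv.symm
      simp only [topPairs, Set.mem_ofPred_eq] at huv
      simp only [mem_range_shift, shift_apply, Fin.val_succ] at *
      omega
  rw [← himage,
    Set.ncard_image_of_injective _ ((shift s h).injective.prodMap (shift s h).injective)]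

theorem ncard_distThreePairs_one_three : (distThreePairs (ZT 1 3)).ncard = 42 := by
  have := ncard_setOf_dist_eq_three_and_eq_card (G := ZT 1 3) (fun _ => True)
  simp only [and_true] at this
  rw [distThreePairs, this]
  decide +kernel

theorem ncard_distThreePairs_inter_topPairs_three {k : ℕ} (hk : 2 ≤ k) :
    (distThreePairs (ZT k 3) ∩ topPairs k 3).ncard = 48 := by
  induction k, hk using Nat.le_induction with
  | base => exact (ncard_setOf_dist_eq_three_and_eq_card _).trans (by decide +kernel)
  | succ k hk ih =>
    rcases (by omega : k = 2 ∨ k = 3 ∨ 4 ≤ k) with rfl | rfl | hk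
    · exact (ncard_setOf_dist_eq_three_and_eq_card _).trans (by decide +kernel)
    · exact (ncard_setOf_dist_eq_three_and_eq_card _).trans (by decide +kernel)
    · rw [ncard_distThreePairs_inter_topPairs_succ (by omega), ih]

theorem ncard_distThreePairs_three {r : ℕ} (hr : 1 ≤ r) :
    (distThreePairs (ZT r 3)).ncard = 48 * r - 6 := by
  induction r, hr using Nat.le_induction with
  | base => exact ncard_distThreePairs_one_three
  | succ r hr ih =>
    rw [ncard_distThreePairs_succ, ih, ncard_distThreePairs_inter_topPairs_three (by omega)]
    omega

end ZT

theorem wienerPolarity_ZT_three (r : ℕ) (hr : 1 ≤ r) :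
    wienerPolarity (ZT r 3) = 24 * r - 3 := by
  have := SimpleGraph.two_mul_wienerPolarity (ZT r 3)
  rw [ZT.ncard_distThreePairs_three hr] at this
  omega
end

section
/- For every even integer r ≥ 4 and every integer h ≥ 1, the girth of the armchair nanotube graph AT(r,h) equals 6. -/
/-- The armchair nanotube `AT(r,h)` with `r` columns of hexagons, each containing `h` hexagons:
vertex set `ZMod r × {0,…,2h+1}`; vertical edges join `(i,j)` and `(i,j+1)`, and horizontal
edges join `(i,j)` and `(i+1,j)` when `i + j` is even. -/
def AT (r h : ℕ) : SimpleGraph (ZMod r × Fin (2 * h + 2)) :=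
  SimpleGraph.fromRel (fun p q =>
    (p.1 = q.1 ∧ (q.2 : ℕ) = (p.2 : ℕ) + 1) ∨
    (p.2 = q.2 ∧ q.1 = p.1 + 1 ∧ Even (p.1.val + (p.2 : ℕ))))

/-!
Colour `(i, j)` by the parity of `i + j`; as `r` is even this is a proper 2-colouring, so every
cycle has even length, and it remains to exclude 4-cycles. Placing `(i, j)` at the point `(i, j) ∈
ZMod r × ℤ`, a vertex of colour 0 is adjacent to its translates by `(0, 1)`, `(0, -1)`, `(1, 0)`,
and a vertex of colour 1 to its translates by their negatives. Since `1 ≠ -1` in `ZMod r`, distinct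
pairs of these three steps have distinct differences, so two distinct vertices have at most one
common neighbour. A hexagon of the tube gives the matching 6-cycle.
-/

def hexSteps {A : Type*} [AddCommGroup A] (σ : A) : Set (A × ℤ) := {(0, 1), (0, -1), (σ, 0)}

lemma eq_of_sub_eq_sub_of_mem_hexSteps {A : Type*} [AddCommGroup A] {σ : A} (hσ : σ ≠ -σ)
    {s₁ s₂ s₃ s₄ : A × ℤ} (h₁ : s₁ ∈ hexSteps σ) (h₂ : s₂ ∈ hexSteps σ) (h₃ : s₃ ∈ hexSteps σ)
    (h₄ : s₄ ∈ hexSteps σ) (h : s₁ - s₂ = s₃ - s₄) (hne : s₁ ≠ s₂) : s₁ = s₃ := by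
  have hσ₀ : σ ≠ 0 := fun h₀ => hσ (by simp [h₀])
  simp only [hexSteps, Set.mem_insert_iff, Set.mem_singleton_iff] at h₁ h₂ h₃ h₄
  rcases h₁ with rfl | rfl | rfl <;> rcases h₂ with rfl | rfl | rfl <;>
    rcases h₃ with rfl | rfl | rfl <;> rcases h₄ with rfl | rfl | rfl <;>
    simp_all [Prod.ext_iff, eq_comm (a := σ)]

namespace AT

open SimpleGraph

variable {r h : ℕ}

def parity (hr : 2 ∣ r) (p : ZMod r × Fin (2 * h + 2)) : ZMod 2 :=
  ZMod.castHom hr (ZMod 2) p.1 + ((p.2 : ℕ) : ZMod 2)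

lemma parity_eq_zero_iff [NeZero r] (hr : 2 ∣ r) (p : ZMod r × Fin (2 * h + 2)) :
    parity hr p = 0 ↔ Even (p.1.val + (p.2 : ℕ)) := by
  rw [parity, ZMod.castHom_apply, ← ZMod.natCast_val, ← Nat.cast_add,
    ZMod.natCast_eq_zero_iff_even]

lemma parity_of_adj (hr : 2 ∣ r) {p q : ZMod r × Fin (2 * h + 2)} (hpq : (AT r h).Adj p q) :
    parity hr q = parity hr p + 1 := by
  rw [AT, fromRel_adj] at hpq
  obtain ⟨-, (⟨h₁, h₂⟩ | ⟨h₂, h₁, -⟩) | (⟨h₁, h₂⟩ | ⟨h₂, h₁, -⟩)⟩ := hpq <;>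
    simp only [parity, h₁, h₂, map_add, map_one, Nat.cast_add, Nat.cast_one] <;>
    ring_nf <;> reduce_mod_char

def coloring (hr : 2 ∣ r) : (AT r h).Coloring (ZMod 2) :=
  Coloring.mk (parity hr) fun hpq => by simp [parity_of_adj hr hpq]

lemma even_length (hr : 2 ∣ r) {u : ZMod r × Fin (2 * h + 2)} (w : (AT r h).Walk u u) :
    Even w.length :=
  two_colorable_iff_forall_loop_even.mp (coloring hr).colorable u w

def sign (hr : 2 ∣ r) (p : ZMod r × Fin (2 * h + 2)) : ℤˣ := if parity hr p = 0 then 1 else -1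

lemma sign_of_adj (hr : 2 ∣ r) {p q : ZMod r × Fin (2 * h + 2)} (hpq : (AT r h).Adj p q) :
    sign hr q = -sign hr p := by
  unfold sign
  rw [parity_of_adj hr hpq]
  generalize parity hr p = c
  fin_cases c <;> decide

def pos (p : ZMod r × Fin (2 * h + 2)) : ZMod r × ℤ := (p.1, (p.2 : ℕ))

lemma pos_injective : Function.Injective (pos : ZMod r × Fin (2 * h + 2) → ZMod r × ℤ) := by
  intro p q hpq
  simp only [pos, Prod.mk.injEq, Nat.cast_inj] at hpq
  exact Prod.ext hpq.1 (Fin.ext hpq.2)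

lemma pos_of_adj [NeZero r] (hr : 2 ∣ r) {p q : ZMod r × Fin (2 * h + 2)}
    (hpq : (AT r h).Adj p q) : ∃ s ∈ hexSteps (1 : ZMod r), pos q = pos p + sign hr p • s := by
  have hsign := sign_of_adj hr hpq
  rw [AT, fromRel_adj] at hpq
  obtain ⟨-, (⟨h₁, h₂⟩ | ⟨h₂, h₁, h₃⟩) | (⟨h₁, h₂⟩ | ⟨h₂, h₁, h₃⟩)⟩ := hpq
  · refine ⟨sign hr p • (0, 1), ?_, ?_⟩
    · rcases Int.units_eq_one_or (sign hr p) with hp | hp <;> simp [hexSteps, hp]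
    · simp [pos, smul_smul, h₁, h₂]
  · have hp : sign hr p = 1 := if_pos ((parity_eq_zero_iff hr p).mpr h₃)
    refine ⟨(1, 0), by simp [hexSteps], ?_⟩
    simp [pos, hp, h₁, h₂]
  · refine ⟨sign hr p • (0, -1), ?_, ?_⟩
    · rcases Int.units_eq_one_or (sign hr p) with hp | hp <;> simp [hexSteps, hp]
    · simp [pos, smul_smul, h₁, h₂]
  · have hq : sign hr q = 1 := if_pos ((parity_eq_zero_iff hr q).mpr h₃)
    have hp : sign hr p = -1 := neg_eq_iff_eq_neg.mp (hsign ▸ hq)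
    refine ⟨(1, 0), by simp [hexSteps], ?_⟩
    simp [pos, hp, h₁, h₂]

lemma commonNeighbors_subsingleton [NeZero r] (hr : 2 ∣ r) (hneg : (1 : ZMod r) ≠ -1)
    {a c : ZMod r × Fin (2 * h + 2)} (hac : a ≠ c) :
    ((AT r h).commonNeighbors a c).Subsingleton := by
  rintro b ⟨hab, hcb⟩ d ⟨had, hcd⟩
  obtain ⟨s₁, hs₁, e₁⟩ := pos_of_adj hr hab
  obtain ⟨s₂, hs₂, e₂⟩ := pos_of_adj hr hcb
  obtain ⟨s₃, hs₃, e₃⟩ := pos_of_adj hr had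
  obtain ⟨s₄, hs₄, e₄⟩ := pos_of_adj hr hcd
  have hca : sign hr c = sign hr a :=
    neg_inj.mp ((sign_of_adj hr hcb).symm.trans (sign_of_adj hr hab))
  rw [hca] at e₂ e₄
  by_contra hbd
  have h₁₃ : s₁ ≠ s₃ := fun h => hbd (pos_injective (by rw [e₁, e₃, h]))
  have key : s₁ - s₃ = s₂ - s₄ := by
    apply smul_left_cancel (sign hr a)
    rw [smul_sub, smul_sub]
    linear_combination (norm := abel) e₃ + e₂ - e₁ - e₄
  have h₁₂ := eq_of_sub_eq_sub_of_mem_hexSteps hneg hs₁ hs₃ hs₂ hs₄ key h₁₃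
  exact hac (pos_injective (add_right_cancel (e₁.symm.trans (by rw [e₂, h₁₂]))))

lemma six_le_length_of_isCycle [NeZero r] (hr : 2 ∣ r) (hneg : (1 : ZMod r) ≠ -1)
    {u : ZMod r × Fin (2 * h + 2)} {w : (AT r h).Walk u u} (hw : w.IsCycle) : 6 ≤ w.length := by
  have h₃ := hw.three_le_length
  obtain ⟨k, hk⟩ := even_length hr w
  suffices w.length ≠ 4 by omega
  intro h₄
  have hinj {i j : ℕ} (hi : 1 ≤ i) (hi' : i ≤ 4) (hj : 1 ≤ j) (hj' : j ≤ 4)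
      (hij : w.getVert i = w.getVert j) : i = j :=
    hw.getVert_injOn ⟨hi, h₄ ▸ hi'⟩ ⟨hj, h₄ ▸ hj'⟩ hij
  have hadj {i : ℕ} (hi : i < 4) : (AT r h).Adj (w.getVert i) (w.getVert (i + 1)) :=
    w.adj_getVert_succ (h₄ ▸ hi)
  have hclosed : w.getVert 4 = w.getVert 0 := by rw [← h₄, w.getVert_length, w.getVert_zero]
  have h₀₂ : w.getVert 0 ≠ w.getVert 2 := fun h =>
    absurd (hinj (i := 4) (j := 2) (by norm_num) le_rfl (by norm_num) (by norm_num)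
      (hclosed.trans h)) (by norm_num)
  have h₁₃ := commonNeighbors_subsingleton hr hneg h₀₂
    ⟨hadj (i := 0) (by norm_num), (hadj (i := 1) (by norm_num)).symm⟩
    ⟨hclosed ▸ (hadj (i := 3) (by norm_num)).symm, hadj (i := 2) (by norm_num)⟩
  exact absurd (hinj le_rfl (by norm_num) (by norm_num) (by norm_num) h₁₃) (by norm_num)

lemma exists_isCycle_length_six [Nontrivial (ZMod r)] (hh : 1 ≤ h) :
    ∃ (u : ZMod r × Fin (2 * h + 2)) (w : (AT r h).Walk u u), w.IsCycle ∧ w.length = 6 := by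
  have h₃ : 3 ≤ 2 * h + 2 := by omega
  let v (i : ZMod r) (j : Fin 3) : ZMod r × Fin (2 * h + 2) := (i, Fin.castLE h₃ j)
  have e₁ : (AT r h).Adj (v 0 0) (v 1 0) := by simp [AT, v]
  have e₂ : (AT r h).Adj (v 1 0) (v 1 1) := by simp [AT, v, Fin.ext_iff]
  have e₃ : (AT r h).Adj (v 1 1) (v 1 2) := by simp [AT, v]
  have e₄ : (AT r h).Adj (v 1 2) (v 0 2) := by simp [AT, v]
  have e₅ : (AT r h).Adj (v 0 2) (v 0 1) := by simp [AT, v]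
  have e₆ : (AT r h).Adj (v 0 1) (v 0 0) := by simp [AT, v, Fin.ext_iff]
  refine ⟨_, .cons e₁ (.cons e₂ (.cons e₃ (.cons e₄ (.cons e₅ (.cons e₆ .nil))))), ?_, rfl⟩
  simp [Walk.isCycle_def, v, Fin.ext_iff]

end AT

theorem AT_egirth (r h : ℕ) (hr : 4 ≤ r) (hre : Even r) (hh : 1 ≤ h) :
    (AT r h).egirth = 6 := by
  have : NeZero r := ⟨by omega⟩
  have : Fact (1 < r) := ⟨by omega⟩
  have : Fact (2 < r) := ⟨by omega⟩
  refine le_antisymm ?_ (SimpleGraph.le_egirth.mpr fun u w hw => ?_)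
  · obtain ⟨u, w, hw, hlen⟩ := AT.exists_isCycle_length_six (r := r) hh
    simpa [hlen] using SimpleGraph.egirth_le_length hw
  · exact_mod_cast
      AT.six_le_length_of_isCycle (even_iff_two_dvd.mp hre) ZMod.neg_one_ne_one.symm hw
end
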